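/- arXiv:math/0610623 — 2 statements merged into one kernel-verified Lean document; each statement's English description precedes it below -/
import Mathlib

section
/- Let τ' > 0, u* ∈ ∂C(0) and (k_j)_{j∈J(u*)} ∈ ℤ^{J(u*)}. Then the set SSAT(ū*, (0, τ']) ∩ Dom((k_j)_{j∈J(u*)}) contains at most one point, where Dom((k_j)_{j∈J(u*)}) = { τ Σ_{j∈J(u*)} k_j ψ_j + τ Σ_{i∉J(u*)} k_i ψ_i : (k_i)_{i∉J(u*)} ∈ ℤ^{I∖J(u*)} } and ū* = {w ∈ C(0) : J(w) = J(u*)}. -/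
/-! Write `w = sol u - u`, `w' = sol u' - u'` and `φ`, `φ'` for the derivatives of `f` at `w`,
`w'`. The difference `u - u'` has only free coordinates, on which `φ` and `φ'` vanish, so the
variational inequalities of the two projections, Euler's identity `φ w = f w` and `φ ≤ f` give
`f w ≤ φ w' ≤ f w' ≤ φ' w ≤ f w`. Thus `φ` supports the unit ball of `f` at `w / f w` and at
`w' / f w'`, which strict convexity forces to coincide, and `w = w'`. Then `u - u' = sol u - sol u'`
has free coordinates of modulus `< τ` lying in `τℤ`, hence zero, while the fixed coordinates of
`u` and `u'` agree by the slice condition. -/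

open MeasureTheory Filter Set
open scoped Classical

noncomputable section

/-- The ambient space `ℝ^N` with the Euclidean structure. -/
abbrev Euc (N : ℕ) := EuclideanSpace ℝ (Fin N)

variable {N : ℕ}

/-- The cell `C((k_i))` : points whose coordinates in the basis `ψ` satisfy
`τ(k_i - 1/2) ≤ u_i ≤ τ(k_i + 1/2)`. -/
def cube (ψ : Module.Basis (Fin N) ℝ (Euc N)) (τ : ℝ) (k : Fin N → ℤ) : Set (Euc N) :=
  {u | ∀ i, τ * ((k i : ℝ) - 1/2) ≤ ψ.repr u i ∧ ψ.repr u i ≤ τ * ((k i : ℝ) + 1/2)}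

/-- The central cell `C(0)`. -/
def cube0 (ψ : Module.Basis (Fin N) ℝ (Euc N)) (τ : ℝ) : Set (Euc N) := cube ψ τ 0

/-- The set of active (saturated) coordinates `J(u)` for `u ∈ C(0)`. -/
def Jset (ψ : Module.Basis (Fin N) ℝ (Euc N)) (τ : ℝ) (u : Euc N) : Set (Fin N) :=
  {i | ψ.repr u i = τ / 2 ∨ ψ.repr u i = -(τ / 2)}

/-- `sol` is the solution map of the problems `(P)(u)` : `sol u` minimizes `f(v - u)` over
`C(0)`.  (Under the hypotheses on `f` the minimizer is unique.) -/
def IsSol (ψ : Module.Basis (Fin N) ℝ (Euc N)) (τ : ℝ) (f : Euc N → ℝ) (sol : Euc N → Euc N) : Prop :=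
  ∀ u, sol u ∈ cube0 ψ τ ∧ IsMinOn (fun v => f (v - u)) (cube0 ψ τ) (sol u)

/-- `SSAT(C, A)` : the set of data `u` whose solution `sol u` lies in `C` and with
`f_d(u - sol u) ∈ A`. -/
def SSAT (sol : Euc N → Euc N) (fd : Euc N → ℝ) (C : Set (Euc N)) (A : Set ℝ) : Set (Euc N) :=
  {u | sol u ∈ C ∧ fd (u - sol u) ∈ A}

/-- `f` is a norm. -/
structure IsNormLike (f : Euc N → ℝ) : Prop where
  add_le : ∀ x y, f (x + y) ≤ f x + f y
  smul_eq : ∀ (c : ℝ) (x), f (c • x) = |c| * f x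
  eq_zero_iff : ∀ x, f x = 0 ↔ x = 0

/-- `f` is a norm, continuously differentiable away from `0`, with strictly convex
level sets. -/
structure GoodNorm (f : Euc N → ℝ) : Prop where
  add_le : ∀ x y, f (x + y) ≤ f x + f y
  smul_eq : ∀ (c : ℝ) (x), f (c • x) = |c| * f x
  eq_zero_iff : ∀ x, f x = 0 ↔ x = 0
  smooth : ∀ x : Euc N, x ≠ 0 → ContDiffAt ℝ 1 f x
  sconv : StrictConvex ℝ {x : Euc N | f x ≤ 1}

/-- `f` is curved : the normalized-gradient map `h : {f = 1} → S^{N-1}`,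
`h(u) = ∇f(u)/‖∇f(u)‖₂`, is a bijection whose inverse is Lipschitz. -/
def Curved (f : Euc N → ℝ) : Prop :=
  ∃ (L : NNReal) (g : Euc N → Euc N),
    LipschitzOnWith L g (Metric.sphere (0 : Euc N) 1) ∧
    (∀ u : Euc N, f u = 1 → g (‖gradient f u‖⁻¹ • gradient f u) = u) ∧
    ∀ w ∈ Metric.sphere (0 : Euc N) 1, ∃ u, f u = 1 ∧ ‖gradient f u‖⁻¹ • gradient f u = w

/-- The projection `p` onto `Span(ψ_j : j ∈ J)` along the other basis vectors. -/
def pJ (ψ : Module.Basis (Fin N) ℝ (Euc N)) (J : Set (Fin N)) (x : Euc N) : Euc N :=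
  ∑ j : Fin N, if j ∈ J then ψ.repr x j • ψ j else 0

/-- The "center" `u^c` of the face of `u` : keep the saturated coordinates, zero out
the others. -/
def ucOf (ψ : Module.Basis (Fin N) ℝ (Euc N)) (τ : ℝ) (u : Euc N) : Euc N :=
  pJ ψ (Jset ψ τ u) u

/-- The equivalence class `ū` of `u` in `C(0)` : same active set. -/
def ubar (ψ : Module.Basis (Fin N) ℝ (Euc N)) (τ : ℝ) (u : Euc N) : Set (Euc N) :=
  {w ∈ cube0 ψ τ | Jset ψ τ w = Jset ψ τ u}

/-- The discrete grid `D = τ ℤ^N` (in the basis `ψ`). -/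
def Dgrid (ψ : Module.Basis (Fin N) ℝ (Euc N)) (τ : ℝ) : Set (Euc N) :=
  {x | ∃ k : Fin N → ℤ, x = ∑ i, (τ * (k i : ℝ)) • ψ i}

/-- The slice `Dom((k_j)_{j∈J})` of the grid : grid points whose `J`-coordinates are
the prescribed `τ k_j`. -/
def DomSlice (ψ : Module.Basis (Fin N) ℝ (Euc N)) (τ : ℝ) (J : Set (Fin N)) (k : Fin N → ℤ) :
    Set (Euc N) :=
  {x ∈ Dgrid ψ τ | ∀ j ∈ J, ψ.repr x j = τ * (k j : ℝ)}

/-- The grid `τ ℤ^J` inside `Span(ψ_j : j ∈ J)`. -/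
def JgridJ (ψ : Module.Basis (Fin N) ℝ (Euc N)) (τ : ℝ) (J : Set (Fin N)) : Set (Euc N) :=
  {x | ∃ k : Fin N → ℤ, x = ∑ j : Fin N, if j ∈ J then (τ * (k j : ℝ)) • ψ j else 0}

/-- `Leb_K(S)` : the Lebesgue measure (in `ℝ^{#J}`) of the set of `J`-indexed coordinate
families whose combination lies in `S`. -/
def lebJ (ψ : Module.Basis (Fin N) ℝ (Euc N)) (J : Set (Fin N)) (S : Set (Euc N)) : ENNReal :=
  volume {a : ↥J → ℝ | (∑ j : ↥J, a j • ψ (j : Fin N)) ∈ S}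

/-- The set `C_K` of centers of the faces of codimension `K`. -/
def CKset (ψ : Module.Basis (Fin N) ℝ (Euc N)) (τ : ℝ) (K : ℕ) : Set (Euc N) :=
  {x | ∃ (J : Set (Fin N)) (ε : Fin N → ℝ), J.ncard = K ∧ (∀ j ∈ J, ε j = 1 ∨ ε j = -1) ∧
    x = ∑ j : Fin N, if j ∈ J then (ε j * (τ / 2)) • ψ j else 0}

/-- The set `Cl_K` of boundary points of `C(0)` with exactly `K` active constraints. -/
def ClKset (ψ : Module.Basis (Fin N) ℝ (Euc N)) (τ : ℝ) (K : ℕ) : Set (Euc N) :=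
  {u | u ∈ frontier (cube0 ψ τ) ∧ (Jset ψ τ u).ncard = K}

/-- `k_i(u)` : the unique integer with `τ(k_i - 1/2) ≤ u_i < τ(k_i + 1/2)`. -/
def kfun (ψ : Module.Basis (Fin N) ℝ (Euc N)) (τ : ℝ) (u : Euc N) (i : Fin N) : ℤ :=
  ⌊ψ.repr u i / τ + 1 / 2⌋

/-- The grid point `τ Σ k_i(u) ψ_i` approximating `u`. -/
def gridpt (ψ : Module.Basis (Fin N) ℝ (Euc N)) (τ : ℝ) (u : Euc N) : Euc N :=
  ∑ i, (τ * (kfun ψ τ u i : ℝ)) • ψ i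

/-- `J̃(u)` : the active set of the solution of `(P)` at the grid point of `u`. -/
def Jtil (ψ : Module.Basis (Fin N) ℝ (Euc N)) (τ : ℝ) (sol : Euc N → Euc N) (u : Euc N) :
    Set (Fin N) :=
  Jset ψ τ (sol (gridpt ψ τ u))

open Topology

section Homogeneous

variable {E : Type*} [NormedAddCommGroup E] [NormedSpace ℝ E] {f : E → ℝ} {φ : E →L[ℝ] ℝ}
  {w : E}

theorem HasFDerivAt.apply_le_of_eventually_le (hf : HasFDerivAt f φ w) {z : E} {c : ℝ}
    (h : ∀ᶠ t in 𝓝[>] (0 : ℝ), f (w + t • z) ≤ f w + t * c) : φ z ≤ c := by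
  have hline : HasDerivAt (fun t : ℝ => f (w + t • z)) (φ z) 0 :=
    hf.comp_hasDerivAt_of_eq 0 (by simpa using ((hasDerivAt_id (0 : ℝ)).smul_const z).const_add w)
      (by simp)
  refine le_of_tendsto (by simpa using hline.tendsto_slope_zero_right) ?_
  filter_upwards [h, self_mem_nhdsWithin] with t ht (htpos : 0 < t)
  rw [inv_mul_le_iff₀ htpos]
  linarith

theorem HasFDerivAt.apply_le_of_subadditive (hadd : ∀ x y, f (x + y) ≤ f x + f y)
    (hsmul : ∀ (c : ℝ) x, f (c • x) = |c| * f x) (hf : HasFDerivAt f φ w) (z : E) :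
    φ z ≤ f z :=
  hf.apply_le_of_eventually_le <| eventually_nhdsWithin_of_forall fun t (ht : 0 < t) => by
    simpa [hsmul, _root_.abs_of_pos ht] using hadd w (t • z)

theorem HasFDerivAt.apply_self_of_homogeneous (hsmul : ∀ (c : ℝ) x, f (c • x) = |c| * f x)
    (hf : HasFDerivAt f φ w) : φ w = f w := by
  have hup : φ w ≤ f w := hf.apply_le_of_eventually_le <|
    eventually_nhdsWithin_of_forall fun t (ht : 0 < t) => by
      rw [show w + t • w = (1 + t) • w by module, hsmul, _root_.abs_of_pos (by linarith)]
      linarith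
  have hdown : φ (-w) ≤ -f w := hf.apply_le_of_eventually_le <| by
    filter_upwards [Ioo_mem_nhdsGT one_pos] with t ht
    rw [show w + t • -w = (1 - t) • w by module, hsmul, _root_.abs_of_pos (by linarith [ht.2])]
    linarith
  rw [map_neg] at hdown
  linarith

/-- At the midpoint of two maximizers the functional would have an interior local maximum. -/
theorem StrictConvex.eq_of_isMaxOn {S : Set E} (hS : StrictConvex ℝ S) (hφ : φ ≠ 0) {x y : E}
    (hx : x ∈ S) (hy : y ∈ S) (hmx : IsMaxOn φ S x) (hmy : IsMaxOn φ S y) : x = y := by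
  by_contra hxy
  have hm : (1 / 2 : ℝ) • x + (1 / 2 : ℝ) • y ∈ interior S :=
    hS hx hy hxy (by norm_num) (by norm_num) (by norm_num)
  have hφxy : φ y = φ x := le_antisymm (hmx hy) (hmy hx)
  have hφm : φ ((1 / 2 : ℝ) • x + (1 / 2 : ℝ) • y) = φ x := by
    rw [map_add, map_smul, map_smul, hφxy]
    ring
  have hmax : IsLocalMax φ ((1 / 2 : ℝ) • x + (1 / 2 : ℝ) • y) :=
    Filter.mem_of_superset (mem_interior_iff_mem_nhds.1 hm) fun z hz => hφm ▸ hmx hz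
  exact hφ (hmax.hasFDerivAt_eq_zero φ.hasFDerivAt)

/-- The derivative of `f` at `w` supports the unit ball `{f ≤ 1}` only at `w / f w`. -/
theorem inv_smul_eq_of_hasFDerivAt (hadd : ∀ x y, f (x + y) ≤ f x + f y)
    (hsmul : ∀ (c : ℝ) x, f (c • x) = |c| * f x) (hsc : StrictConvex ℝ {x | f x ≤ 1})
    (hf : HasFDerivAt f φ w) {w' : E} (hw : 0 < f w) (hw' : 0 < f w') (hφw' : φ w' = f w') :
    (f w)⁻¹ • w = (f w')⁻¹ • w' := by
  have hnormalize : ∀ z, 0 < f z → φ z = f z → f ((f z)⁻¹ • z) = 1 ∧ φ ((f z)⁻¹ • z) = 1 :=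
    fun z hz hφz => by
      rw [hsmul, map_smul, smul_eq_mul, hφz, abs_of_pos (inv_pos.2 hz), inv_mul_cancel₀ hz.ne']
      exact ⟨rfl, rfl⟩
  have hmax : ∀ z, 0 < f z → φ z = f z → IsMaxOn φ {x | f x ≤ 1} ((f z)⁻¹ • z) :=
    fun z hz hφz x hx => by
      rw [(hnormalize z hz hφz).2]
      exact (hf.apply_le_of_subadditive hadd hsmul x).trans hx
  obtain ⟨hfx, hφx⟩ := hnormalize w hw (hf.apply_self_of_homogeneous hsmul)
  refine hsc.eq_of_isMaxOn (fun h => by simp [h] at hφx) hfx.le (hnormalize w' hw' hφw').1.le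
    (hmax w hw (hf.apply_self_of_homogeneous hsmul)) (hmax w' hw' hφw')

end Homogeneous

theorem IsMinOn.hasFDerivAt_apply_sub_nonneg {E : Type*} [NormedAddCommGroup E]
    [NormedSpace ℝ E] {g : E → ℝ} {φ : E →L[ℝ] ℝ} {s : Set E} {a y : E} (hmin : IsMinOn g s a)
    (hg : HasFDerivAt g φ a) (hs : Convex ℝ s) (ha : a ∈ s) (hy : y ∈ s) : 0 ≤ φ (y - a) :=
  hmin.localize.hasFDerivWithinAt_nonneg hg.hasFDerivWithinAt
    (sub_mem_posTangentConeAt_of_segment_subset (hs.segment_subset ha hy))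

theorem Module.Basis.map_eq_zero_of_forall {ι R M F : Type*} [Fintype ι] [CommSemiring R]
    [AddCommMonoid M] [Module R M] [FunLike F M R] [LinearMapClass F R M R] (b : Basis ι R M)
    (φ : F) {x : M} (h : ∀ i, b.repr x i = 0 ∨ φ (b i) = 0) : φ x = 0 := by
  rw [← b.sum_repr x, map_sum]
  refine Finset.sum_eq_zero fun i _ => ?_
  rcases h i with h | h <;> simp [h]

theorem Int.eq_of_abs_mul_sub_mul_lt {τ : ℝ} {m m' : ℤ} (h : |τ * m - τ * m'| < τ) : m = m' := by
  have hτ : 0 < τ := (abs_nonneg _).trans_lt h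
  rw [← mul_sub, abs_mul, abs_of_pos hτ, mul_lt_iff_lt_one_right hτ, ← Int.cast_sub,
    ← Int.cast_abs, ← Int.cast_one, Int.cast_lt, Int.abs_lt_one_iff, sub_eq_zero] at h
  exact h

namespace GoodNorm

variable {f : Euc N → ℝ}

theorem pos (hf : GoodNorm f) {x : Euc N} (hx : x ≠ 0) : 0 < f x := by
  have hneg : f (-x) = f x := by simpa using hf.smul_eq (-1) x
  have h0 : f 0 = 0 := (hf.eq_zero_iff 0).2 rfl
  have := hf.add_le x (-x)
  rw [add_neg_cancel, h0, hneg] at this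
  exact lt_of_le_of_ne (by linarith) (Ne.symm fun h => hx ((hf.eq_zero_iff x).1 h))

theorem hasFDerivAt (hf : GoodNorm f) {x : Euc N} (hx : x ≠ 0) :
    HasFDerivAt f (fderiv ℝ f x) x :=
  ((hf.smooth x hx).differentiableAt one_ne_zero).hasFDerivAt

end GoodNorm

section Cube

variable {ψ : Module.Basis (Fin N) ℝ (Euc N)} {τ : ℝ}

theorem mem_cube0_iff {v : Euc N} : v ∈ cube0 ψ τ ↔ ∀ i, |ψ.repr v i| ≤ τ / 2 := by
  simp only [cube0, cube, Set.mem_ofPred_eq, Pi.zero_apply, Int.cast_zero, abs_le]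
  refine forall_congr' fun i => ?_
  constructor <;> rintro ⟨h1, h2⟩ <;> constructor <;> linarith

theorem convex_cube (k : Fin N → ℤ) : Convex ℝ (cube ψ τ k) := by
  have : cube ψ τ k = ⋂ i, ψ.coord i ⁻¹' Icc (τ * ((k i : ℝ) - 1/2)) (τ * ((k i : ℝ) + 1/2)) := by
    ext; simp [cube]
  rw [this]
  exact convex_iInter fun i => (convex_Icc _ _).linear_preimage _

theorem abs_repr_lt_of_notMem_Jset {v : Euc N} (hv : v ∈ cube0 ψ τ) {i : Fin N}
    (hi : i ∉ Jset ψ τ v) : |ψ.repr v i| < τ / 2 :=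
  lt_of_le_of_ne (mem_cube0_iff.1 hv i) fun h => hi ((abs_eq (h ▸ abs_nonneg _)).1 h)

theorem add_smul_mem_cube0 {v : Euc N} (hv : v ∈ cube0 ψ τ) {i : Fin N} {t : ℝ}
    (ht : |ψ.repr v i| + |t| ≤ τ / 2) : v + t • ψ i ∈ cube0 ψ τ := by
  refine mem_cube0_iff.2 fun j => ?_
  rw [map_add, map_smul, ψ.repr_self, Finsupp.add_apply, Finsupp.smul_apply,
    Finsupp.single_apply]
  split_ifs with hij
  · subst hij
    simpa using (abs_add_le _ _).trans ht
  · simpa using mem_cube0_iff.1 hv j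

theorem apply_basis_eq_zero_of_forall_nonneg {v : Euc N} (hv : v ∈ cube0 ψ τ) {i : Fin N}
    (hi : i ∉ Jset ψ τ v) {φ : Euc N →L[ℝ] ℝ} (hφ : ∀ y ∈ cube0 ψ τ, 0 ≤ φ (y - v)) :
    φ (ψ i) = 0 := by
  have hgap : 0 < τ / 2 - |ψ.repr v i| := sub_pos.2 (abs_repr_lt_of_notMem_Jset hv hi)
  have hstep : ∀ t : ℝ, |t| = τ / 2 - |ψ.repr v i| → 0 ≤ t * φ (ψ i) := fun t ht => by
    simpa using hφ _ (add_smul_mem_cube0 hv (t := t) (by linarith))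
  have hup := hstep _ (abs_of_pos hgap)
  have hdown := hstep (-(τ / 2 - |ψ.repr v i|)) (by rw [abs_neg, abs_of_pos hgap])
  nlinarith

theorem abs_repr_sub_lt {v v' : Euc N} (hv : v ∈ cube0 ψ τ) (hv' : v' ∈ cube0 ψ τ) {i : Fin N}
    (hi : i ∉ Jset ψ τ v) (hi' : i ∉ Jset ψ τ v') : |ψ.repr v i - ψ.repr v' i| < τ := by
  have := abs_sub (ψ.repr v i) (ψ.repr v' i)
  linarith [abs_repr_lt_of_notMem_Jset hv hi, abs_repr_lt_of_notMem_Jset hv' hi']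

theorem repr_eq_of_mem_Dgrid {u u' : Euc N} (hu : u ∈ Dgrid ψ τ) (hu' : u' ∈ Dgrid ψ τ)
    {i : Fin N} (h : |ψ.repr u i - ψ.repr u' i| < τ) : ψ.repr u i = ψ.repr u' i := by
  obtain ⟨m, rfl⟩ := hu
  obtain ⟨m', rfl⟩ := hu'
  simp only [ψ.repr_sum_self] at h ⊢
  rw [Int.eq_of_abs_mul_sub_mul_lt h]

end Cube

section Solution

variable {ψ : Module.Basis (Fin N) ℝ (Euc N)} {τ : ℝ} {f : Euc N → ℝ} {sol : Euc N → Euc N}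

theorem IsNormLike.ne_of_pos {fd : Euc N → ℝ} (hfd : IsNormLike fd) {x y : Euc N}
    (h : 0 < fd (x - y)) : x ≠ y := by
  rintro rfl
  rw [sub_self, (hfd.eq_zero_iff 0).2 rfl] at h
  exact h.false

theorem fderiv_apply_sub_sol_nonneg (hf : GoodNorm f) (hsol : IsSol ψ τ f sol) {u : Euc N}
    (hw : sol u ≠ u) {y : Euc N} (hy : y ∈ cube0 ψ τ) :
    0 ≤ fderiv ℝ f (sol u - u) (y - sol u) :=
  (hsol u).2.hasFDerivAt_apply_sub_nonneg
    (by simpa [Function.comp_def] using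
      (hf.hasFDerivAt (sub_ne_zero.2 hw)).comp (sol u) (hasFDerivAt_sub_const u))
    (convex_cube 0) (hsol u).1 hy

/-- The variational inequality at `sol u`, where the derivative vanishes on the free directions,
in which `u - u'` lies. -/
theorem le_fderiv_apply_sol_sub (hf : GoodNorm f) (hsol : IsSol ψ τ f sol) {u u' : Euc N}
    (hw : sol u ≠ u) (hcoord : ∀ i ∈ Jset ψ τ (sol u), ψ.repr u i = ψ.repr u' i) :
    f (sol u - u) ≤ fderiv ℝ f (sol u - u) (sol u' - u') := by
  set φ := fderiv ℝ f (sol u - u)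
  have hfree : φ (u - u') = 0 := ψ.map_eq_zero_of_forall φ fun i => by
    by_cases hi : i ∈ Jset ψ τ (sol u)
    · left
      simp [hcoord i hi]
    · exact Or.inr (apply_basis_eq_zero_of_forall_nonneg (hsol u).1 hi
        fun y hy => fderiv_apply_sub_sol_nonneg hf hsol hw hy)
  have hvar := fderiv_apply_sub_sol_nonneg hf hsol hw (hsol u').1
  have heuler : φ (sol u - u) = f (sol u - u) :=
    (hf.hasFDerivAt (sub_ne_zero.2 hw)).apply_self_of_homogeneous hf.smul_eq
  have hsplit : sol u' - u' = (sol u - u) + (sol u' - sol u) + (u - u') := by abel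
  rw [hsplit, map_add, map_add, heuler, hfree]
  linarith

theorem sol_sub_eq (hf : GoodNorm f) (hsol : IsSol ψ τ f sol) {u u' : Euc N} (hw : sol u ≠ u)
    (hw' : sol u' ≠ u') (hJ : Jset ψ τ (sol u) = Jset ψ τ (sol u'))
    (hcoord : ∀ i ∈ Jset ψ τ (sol u), ψ.repr u i = ψ.repr u' i) :
    sol u - u = sol u' - u' := by
  have hd := hf.hasFDerivAt (sub_ne_zero.2 hw)
  have hd' := hf.hasFDerivAt (sub_ne_zero.2 hw')
  have h₁ := le_fderiv_apply_sol_sub hf hsol hw hcoord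
  have h₂ := le_fderiv_apply_sol_sub hf hsol hw' fun i hi => (hcoord i (hJ ▸ hi)).symm
  have h₃ := hd.apply_le_of_subadditive hf.add_le hf.smul_eq (sol u' - u')
  have h₄ := hd'.apply_le_of_subadditive hf.add_le hf.smul_eq (sol u - u)
  have hpos := hf.pos (sub_ne_zero.2 hw)
  have hpos' := hf.pos (sub_ne_zero.2 hw')
  have hray := inv_smul_eq_of_hasFDerivAt hf.add_le hf.smul_eq hf.sconv hd hpos hpos'
    (by linarith)
  rw [show f (sol u - u) = f (sol u' - u') by linarith] at hray
  exact smul_right_injective _ (inv_ne_zero hpos'.ne') hray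

end Solution

theorem stmt7_general {N : ℕ} (ψ : Module.Basis (Fin N) ℝ (Euc N)) (τ : ℝ)
    (f : Euc N → ℝ) (hf : GoodNorm f) (fd : Euc N → ℝ) (hfd : IsNormLike fd)
    (sol : Euc N → Euc N) (hsol : IsSol ψ τ f sol)
    (τ' : ℝ)
    (us : Euc N) (k : Fin N → ℤ) :
    (SSAT sol fd (ubar ψ τ us) (Set.Ioc 0 τ') ∩
      DomSlice ψ τ (Jset ψ τ us) k).Subsingleton := by
  rintro u ⟨⟨⟨hvC, hvJ⟩, hfdu, -⟩, hug, huk⟩ u' ⟨⟨⟨hvC', hvJ'⟩, hfdu', -⟩, hug', huk'⟩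
  have hres := sol_sub_eq hf hsol (hfd.ne_of_pos hfdu).symm (hfd.ne_of_pos hfdu').symm
    (hvJ.trans hvJ'.symm) fun i hi => by rw [huk i (hvJ ▸ hi), huk' i (hvJ ▸ hi)]
  refine ψ.repr.injective (Finsupp.ext fun i => ?_)
  by_cases hi : i ∈ Jset ψ τ us
  · rw [huk i hi, huk' i hi]
  · refine repr_eq_of_mem_Dgrid hug hug' ?_
    have hdiff : ψ.repr u i - ψ.repr u' i = ψ.repr (sol u) i - ψ.repr (sol u') i := by
      have := congrArg (fun z => ψ.repr z i) hres
      simp only [map_sub, Finsupp.coe_sub, Pi.sub_apply] at this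
      linarith
    rw [hdiff]
    exact abs_repr_sub_lt hvC hvC' (hvJ ▸ hi) (hvJ' ▸ hi)

/-- `SSAT(ū*, (0,τ'])` meets each slice `Dom((k_j)_{j∈J(u*)})` of the grid
in at most one point. -/
theorem stmt7 {N : ℕ} (hN : 1 ≤ N) (ψ : Module.Basis (Fin N) ℝ (Euc N)) (τ : ℝ) (hτ : 0 < τ)
    (f : Euc N → ℝ) (hf : GoodNorm f) (fd : Euc N → ℝ) (hfd : IsNormLike fd)
    (sol : Euc N → Euc N) (hsol : IsSol ψ τ f sol)
    (τ' : ℝ) (hτ' : 0 < τ')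
    (us : Euc N) (hus : us ∈ frontier (cube0 ψ τ)) (k : Fin N → ℤ) :
    (SSAT sol fd (ubar ψ τ us) (Set.Ioc 0 τ') ∩
      DomSlice ψ τ (Jset ψ τ us) k).Subsingleton :=
  stmt7_general ψ τ f hf fd hfd sol hsol τ' us k
end
end

section
/- Let τ' > 0, K ∈ {1,…,N}, and let U be a random variable uniformly distributed on the ball {u ∈ ℝ^N : f_d(u) ≤ τ'}. Set M = sup{ f_d(Σ_{i∈I} u_i ψ_i) : |u_i| ≤ 1/2 for all i }. Then, with Cl_K = {u* ∈ ∂C(0) : #J(u*) = K} and D = {τ Σ_{i∈I} k_i ψ_i : (k_i) ∈ ℤ^N}, the probability P( #J̃(U) = K ) satisfies P( #J̃(U) = K ) ≤ (Leb_N(C(0)) / Leb_N({f_d ≤ τ'})) · #( SSAT(Cl_K, (0,+∞)) ∩ {u : f_d(u) ≤ τ' + Mτ} ∩ D ) and P( #J̃(U) = K ) ≥ (Leb_N(C(0)) / Leb_N({f_d ≤ τ'})) · #( SSAT(Cl_K, (0,+∞)) ∩ {u : f_d(u) ≤ τ' − Mτ} ∩ D ), where Leb_N denotes Lebesgue measure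 on ℝ^N. -/
open MeasureTheory Filter Set
open scoped Classical

noncomputable section

variable {N : ℕ}

/-! Rounding every coordinate to the nearest multiple of `τ` sends `u` to the grid point
`gridpt ψ τ u`; its fibres over `D` are translates of a half-open copy of `C(0)`, which differs
from `C(0)` by a null part of the frontier, and `f_d (u - gridpt ψ τ u) ≤ Mτ`. Hence the event
`f_d U ≤ τ' ∧ #J̃(U) = K` is covered by the fibres over the grid points of `SSAT(Cl_K, (0,∞))` in
the ball of radius `τ' + Mτ`, and contains the fibres over those in the ball of radius `τ' - Mτ`.
A grid point whose solution has `K ≥ 1` active constraints is not its own solution, because the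
only grid point in `C(0)` is `0`, which has no active constraint. -/

section FiberCounting

variable {α β : Type*} [MeasurableSpace α] {μ : Measure α} {g : α → β} {A : Set α} {S : Set β}
  {c : ENNReal}

theorem measure_le_mul_ncard_of_mapsTo (hS : S.Finite) (hAS : MapsTo g A S)
    (hc : ∀ b ∈ S, μ (g ⁻¹' {b}) ≤ c) : μ A ≤ c * S.ncard := by
  calc μ A ≤ μ (⋃ b ∈ hS.toFinset, g ⁻¹' {b}) :=
        measure_mono fun a ha => mem_biUnion (hS.mem_toFinset.mpr (hAS ha)) rfl
    _ ≤ ∑ b ∈ hS.toFinset, μ (g ⁻¹' {b}) := measure_biUnion_finset_le _ _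
    _ ≤ ∑ _b ∈ hS.toFinset, c := Finset.sum_le_sum fun b hb => hc b (hS.mem_toFinset.mp hb)
    _ = c * S.ncard := by
        rw [Finset.sum_const, nsmul_eq_mul, mul_comm, Set.ncard_eq_toFinset_card _ hS]

theorem mul_ncard_le_measure_of_preimage_subset (hS : S.Finite)
    (hmeas : ∀ b ∈ S, MeasurableSet (g ⁻¹' {b})) (hc : ∀ b ∈ S, c ≤ μ (g ⁻¹' {b}))
    (hSA : g ⁻¹' S ⊆ A) : c * S.ncard ≤ μ A := by
  calc c * S.ncard = ∑ _b ∈ hS.toFinset, c := by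
        rw [Finset.sum_const, nsmul_eq_mul, mul_comm, Set.ncard_eq_toFinset_card _ hS]
    _ ≤ ∑ b ∈ hS.toFinset, μ (g ⁻¹' {b}) :=
        Finset.sum_le_sum fun b hb => hc b (hS.mem_toFinset.mp hb)
    _ = μ (g ⁻¹' S) := by
        rw [sum_measure_preimage_singleton _ fun b hb => hmeas b (hS.mem_toFinset.mp hb),
          hS.coe_toFinset]
    _ ≤ μ A := measure_mono hSA

end FiberCounting

namespace IsNormLike

variable {N : ℕ} {fd : Euc N → ℝ}

theorem map_zero (hfd : IsNormLike fd) : fd 0 = 0 := by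
  simpa using hfd.smul_eq 0 0

theorem map_neg (hfd : IsNormLike fd) (x : Euc N) : fd (-x) = fd x := by
  simpa using hfd.smul_eq (-1) x

theorem map_sub_rev (hfd : IsNormLike fd) (x y : Euc N) : fd (x - y) = fd (y - x) := by
  rw [← neg_sub, hfd.map_neg]

theorem nonneg (hfd : IsNormLike fd) (x : Euc N) : 0 ≤ fd x := by
  have h := hfd.add_le x (-x)
  rw [add_neg_cancel, hfd.map_zero, hfd.map_neg] at h
  linarith

theorem le_add_sub (hfd : IsNormLike fd) (x y : Euc N) : fd x ≤ fd y + fd (x - y) := by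
  simpa using hfd.add_le y (x - y)

theorem convexOn (hfd : IsNormLike fd) : ConvexOn ℝ univ fd := by
  refine ⟨convex_univ, fun x _ y _ a b ha hb _ => ?_⟩
  calc fd (a • x + b • y) ≤ fd (a • x) + fd (b • y) := hfd.add_le _ _
    _ = a • fd x + b • fd y := by
        rw [hfd.smul_eq, hfd.smul_eq, abs_of_nonneg ha, abs_of_nonneg hb, smul_eq_mul, smul_eq_mul]

theorem continuous (hfd : IsNormLike fd) : Continuous fd :=
  hfd.convexOn.locallyLipschitz.continuous

theorem exists_pos_mul_norm_le (hfd : IsNormLike fd) : ∃ c > 0, ∀ x, c * ‖x‖ ≤ fd x := by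
  by_cases htriv : ∀ x : Euc N, x = 0
  · exact ⟨1, one_pos, fun x => by simp [htriv x, hfd.map_zero]⟩
  push Not at htriv
  obtain ⟨x₀, hx₀⟩ := htriv
  have : Nontrivial (Euc N) := nontrivial_of_ne x₀ 0 hx₀
  obtain ⟨u₀, hu₀, hmin⟩ := (isCompact_sphere (0 : Euc N) 1).exists_isMinOn
    (NormedSpace.sphere_nonempty.mpr zero_le_one) hfd.continuous.continuousOn
  have hu₀0 : u₀ ≠ 0 := ne_zero_of_mem_unit_sphere ⟨u₀, hu₀⟩
  refine ⟨fd u₀, (hfd.nonneg u₀).lt_of_ne' ((hfd.eq_zero_iff u₀).not.mpr hu₀0), fun x => ?_⟩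
  rcases eq_or_ne x 0 with rfl | hx
  · simp [hfd.map_zero]
  have hxn : ‖x‖ ≠ 0 := norm_ne_zero_iff.mpr hx
  have hmem : ‖x‖⁻¹ • x ∈ Metric.sphere (0 : Euc N) 1 := by
    simp [norm_smul, inv_mul_cancel₀ hxn]
  calc fd u₀ * ‖x‖ ≤ fd (‖x‖⁻¹ • x) * ‖x‖ :=
        mul_le_mul_of_nonneg_right (hmin hmem) (norm_nonneg x)
    _ = fd x := by
        rw [hfd.smul_eq, abs_of_nonneg (inv_nonneg.mpr (norm_nonneg x)), mul_comm,
          ← mul_assoc, mul_inv_cancel₀ hxn, one_mul]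

theorem isBounded_setOf_le (hfd : IsNormLike fd) (R : ℝ) :
    Bornology.IsBounded {x | fd x ≤ R} := by
  obtain ⟨c, hc, hle⟩ := hfd.exists_pos_mul_norm_le
  refine isBounded_iff_forall_norm_le.mpr ⟨R / c, fun x hx => ?_⟩
  rw [le_div_iff₀ hc, mul_comm]
  exact (hle x).trans hx

end IsNormLike

section Grid

variable {N : ℕ} (ψ : Module.Basis (Fin N) ℝ (Euc N)) {τ : ℝ}

theorem kfun_eq_round (u : Euc N) (i : Fin N) : kfun ψ τ u i = round (ψ.repr u i / τ) :=
  (round_eq _).symm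

theorem repr_gridpt (u : Euc N) (i : Fin N) : ψ.repr (gridpt ψ τ u) i = τ * kfun ψ τ u i := by
  rw [gridpt, ψ.repr_sum_self]

theorem measurable_gridpt : Measurable (gridpt ψ τ) := by
  have hrepr (i : Fin N) : Measurable fun u : Euc N => ψ.repr u i :=
    ((continuous_apply i).comp ψ.equivFunL.continuous).measurable
  unfold gridpt kfun
  refine Finset.measurable_sum _ fun i _ => ?_
  exact (measurable_const.mul (measurable_from_top.comp
    (((hrepr i).div_const τ).add_const _).floor)).smul_const _

theorem cube0_eq_preimage :
    cube0 ψ τ = ψ.equivFunL ⁻¹' univ.pi fun _ => Icc (-(τ / 2)) (τ / 2) := by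
  ext u
  simp only [cube0, cube, mem_ofPred_eq, mem_preimage, mem_univ_pi, mem_Icc]
  refine forall_congr' fun i => ?_
  simp only [Pi.zero_apply, Int.cast_zero, Module.Basis.equivFunL_apply]
  constructor <;> rintro ⟨h₁, h₂⟩ <;> constructor <;> linarith

theorem convex_cube0 : Convex ℝ (cube0 ψ τ) := by
  rw [cube0_eq_preimage]
  exact (convex_pi fun _ _ => convex_Icc _ _).linear_preimage ψ.equivFunL.toLinearMap

theorem interior_cube0 :
    interior (cube0 ψ τ) = ψ.equivFunL ⁻¹' univ.pi fun _ => Ioo (-(τ / 2)) (τ / 2) := by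
  rw [cube0_eq_preimage]
  refine (ψ.equivFunL.toHomeomorph.preimage_interior _).symm.trans ?_
  simp only [interior_pi_set finite_univ, interior_Icc]
  rfl

theorem gridpt_eq_zero_iff (hτ : τ ≠ 0) (u : Euc N) :
    gridpt ψ τ u = 0 ↔ ∀ i, kfun ψ τ u i = 0 := by
  refine ⟨fun h i => ?_, fun h => by simp [gridpt, h]⟩
  have := repr_gridpt ψ (τ := τ) u i
  rw [h, map_zero, Finsupp.zero_apply, eq_comm, mul_eq_zero] at this
  exact_mod_cast this.resolve_left hτ

theorem preimage_gridpt_zero_subset_cube0 (hτ : 0 < τ) : gridpt ψ τ ⁻¹' {0} ⊆ cube0 ψ τ := by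
  intro u hu
  rw [cube0_eq_preimage, mem_preimage, mem_univ_pi]
  intro i
  have h := abs_sub_round (ψ.repr u i / τ)
  rw [← kfun_eq_round, (gridpt_eq_zero_iff ψ hτ.ne' u).mp hu i, Int.cast_zero, sub_zero,
    abs_div, abs_of_pos hτ, div_le_iff₀ hτ, abs_le] at h
  simp only [Module.Basis.equivFunL_apply, mem_Icc]
  constructor <;> linarith [h.1, h.2]

theorem interior_cube0_subset_preimage_gridpt_zero (hτ : 0 < τ) :
    interior (cube0 ψ τ) ⊆ gridpt ψ τ ⁻¹' {0} := by
  intro u hu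
  rw [interior_cube0, mem_preimage, mem_univ_pi] at hu
  refine (gridpt_eq_zero_iff ψ hτ.ne' u).mpr fun i => ?_
  obtain ⟨h₁, h₂⟩ := hu i
  simp only [Module.Basis.equivFunL_apply] at h₁ h₂
  rw [kfun_eq_round, round_eq_zero_iff, mem_Ico, le_div_iff₀ hτ, div_lt_iff₀ hτ]
  constructor <;> linarith

theorem volume_preimage_gridpt_zero (hτ : 0 < τ) :
    volume (gridpt ψ τ ⁻¹' {0}) = volume (cube0 ψ τ) := by
  refine le_antisymm (measure_mono (preimage_gridpt_zero_subset_cube0 ψ hτ)) ?_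
  calc volume (cube0 ψ τ) = volume (interior (cube0 ψ τ)) :=
        (measure_interior_of_null_frontier ((convex_cube0 ψ).addHaar_frontier volume)).symm
    _ ≤ volume (gridpt ψ τ ⁻¹' {0}) :=
        measure_mono (interior_cube0_subset_preimage_gridpt_zero ψ hτ)

theorem gridpt_sub (hτ : τ ≠ 0) {g : Euc N} (hg : g ∈ Dgrid ψ τ) (u : Euc N) :
    gridpt ψ τ (u - g) = gridpt ψ τ u - g := by
  obtain ⟨k, rfl⟩ := hg
  have hk (i : Fin N) : kfun ψ τ (u - ∑ j, (τ * (k j : ℝ)) • ψ j) i = kfun ψ τ u i - k i := by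
    rw [kfun_eq_round, kfun_eq_round, map_sub, Finsupp.sub_apply, ψ.repr_sum_self,
      sub_div, mul_div_cancel_left₀ _ hτ, round_sub_intCast]
  simp only [gridpt, hk, Int.cast_sub, mul_sub, sub_smul, Finset.sum_sub_distrib]

theorem volume_preimage_gridpt (hτ : 0 < τ) {g : Euc N} (hg : g ∈ Dgrid ψ τ) :
    volume (gridpt ψ τ ⁻¹' {g}) = volume (cube0 ψ τ) := by
  have h : gridpt ψ τ ⁻¹' {g} = (· + -g) ⁻¹' (gridpt ψ τ ⁻¹' {0}) := by
    ext u
    simp [← sub_eq_add_neg, gridpt_sub ψ hτ.ne' hg, sub_eq_zero]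
  rw [h, measure_preimage_add_right, volume_preimage_gridpt_zero ψ hτ]

theorem Dgrid_subset_span :
    Dgrid ψ τ ⊆ Submodule.span ℤ (range fun i => τ • ψ i) := by
  rintro _ ⟨k, rfl⟩
  refine Submodule.sum_mem _ fun i _ => ?_
  rw [mul_comm, ← smul_smul, Int.cast_smul_eq_zsmul]
  exact Submodule.smul_mem _ _ (Submodule.subset_span (mem_range_self i))

theorem finite_inter_Dgrid (hτ : τ ≠ 0) {s : Set (Euc N)} (hs : Bornology.IsBounded s) :
    (s ∩ Dgrid ψ τ).Finite := by
  let b := ψ.isUnitSMul fun _ => hτ.isUnit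
  have hb : range b = range fun i => τ • ψ i := congrArg range (funext (ψ.isUnitSMul_apply _))
  exact (ZSpan.setFinite_inter b hs).subset
    (inter_subset_inter_right _ (hb ▸ Dgrid_subset_span ψ))

theorem eq_zero_of_mem_Dgrid_of_mem_cube0 (hτ : 0 < τ) {g : Euc N} (hg : g ∈ Dgrid ψ τ)
    (hc : g ∈ cube0 ψ τ) : g = 0 := by
  obtain ⟨k, rfl⟩ := hg
  refine Finset.sum_eq_zero fun i _ => ?_
  obtain ⟨h₁, h₂⟩ := hc i
  rw [ψ.repr_sum_self, Pi.zero_apply, Int.cast_zero] at h₁ h₂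
  have hk : |(k i : ℝ)| < 1 := abs_lt.mpr ⟨by nlinarith, by nlinarith⟩
  have hk0 : k i = 0 := Int.abs_lt_one_iff.mp (by exact_mod_cast hk)
  simp [hk0]

theorem Jset_zero (hτ : τ ≠ 0) : Jset ψ τ 0 = ∅ := by
  ext i
  simp [Jset, hτ, eq_comm (a := (0 : ℝ))]

theorem mem_frontier_cube0 {u : Euc N} (hu : u ∈ cube0 ψ τ) (hJ : (Jset ψ τ u).Nonempty) :
    u ∈ frontier (cube0 ψ τ) := by
  refine ⟨subset_closure hu, fun hint => ?_⟩
  obtain ⟨i, hi⟩ := hJ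
  rw [interior_cube0, mem_preimage, mem_univ_pi] at hint
  obtain ⟨h₁, h₂⟩ := hint i
  simp only [Module.Basis.equivFunL_apply] at h₁ h₂
  rcases hi with hi | hi <;> simp only [hi] at h₁ h₂ <;> linarith

theorem isCompact_setOf_abs_repr_le (r : ℝ) : IsCompact {v : Euc N | ∀ i, |ψ.repr v i| ≤ r} := by
  have h : {v : Euc N | ∀ i, |ψ.repr v i| ≤ r} = ψ.equivFunL ⁻¹' univ.pi fun _ => Icc (-r) r := by
    ext v
    simp only [mem_ofPred_eq, mem_preimage, mem_univ_pi, mem_Icc, abs_le,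
      Module.Basis.equivFunL_apply]
  rw [h]
  exact ψ.equivFunL.toHomeomorph.isCompact_preimage.mpr (isCompact_univ_pi fun _ => isCompact_Icc)

end Grid

namespace IsNormLike

variable {N : ℕ} {fd : Euc N → ℝ} (ψ : Module.Basis (Fin N) ℝ (Euc N))

theorem le_sSup_image_setOf_abs_repr_le (hfd : IsNormLike fd) {r : ℝ} {v : Euc N}
    (hv : ∀ i, |ψ.repr v i| ≤ r) :
    fd v ≤ sSup (fd '' {v | ∀ i, |ψ.repr v i| ≤ r}) :=
  le_csSup ((isCompact_setOf_abs_repr_le ψ r).bddAbove_image hfd.continuous.continuousOn)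
    (mem_image_of_mem fd hv)

theorem sub_gridpt_le (hfd : IsNormLike fd) {τ M : ℝ} (hτ : 0 < τ)
    (hM : ∀ v, (∀ i, |ψ.repr v i| ≤ 1 / 2) → fd v ≤ M) (u : Euc N) :
    fd (u - gridpt ψ τ u) ≤ M * τ := by
  have hv (i : Fin N) : |ψ.repr (τ⁻¹ • (u - gridpt ψ τ u)) i| ≤ 1 / 2 := by
    rw [map_smul, map_sub, Finsupp.smul_apply, Finsupp.sub_apply, repr_gridpt, kfun_eq_round,
      smul_eq_mul, mul_sub, ← mul_assoc, inv_mul_cancel₀ hτ.ne', one_mul, inv_mul_eq_div]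
    exact abs_sub_round _
  calc fd (u - gridpt ψ τ u) = fd (τ • τ⁻¹ • (u - gridpt ψ τ u)) := by
        rw [smul_smul, mul_inv_cancel₀ hτ.ne', one_smul]
    _ = τ * fd (τ⁻¹ • (u - gridpt ψ τ u)) := by rw [hfd.smul_eq, abs_of_pos hτ]
    _ ≤ M * τ := by rw [mul_comm]; exact mul_le_mul_of_nonneg_right (hM _ hv) hτ.le

theorem mem_SSAT_ClKset_of_mem_Dgrid (hfd : IsNormLike fd) {τ : ℝ} (hτ : 0 < τ)
    {sol : Euc N → Euc N} {K : ℕ} (hK : K ≠ 0) {g : Euc N} (hg : g ∈ Dgrid ψ τ)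
    (hsol : sol g ∈ cube0 ψ τ) (hJ : (Jset ψ τ (sol g)).ncard = K) :
    g ∈ SSAT sol fd (ClKset ψ τ K) (Ioi 0) := by
  have hJne : (Jset ψ τ (sol g)).Nonempty := nonempty_of_ncard_ne_zero (hJ ▸ hK)
  refine ⟨⟨mem_frontier_cube0 ψ hsol hJne, hJ⟩, (hfd.nonneg _).lt_of_ne' fun h0 => ?_⟩
  have hgs : g = sol g := sub_eq_zero.mp ((hfd.eq_zero_iff _).mp h0)
  have hg0 : g = 0 := eq_zero_of_mem_Dgrid_of_mem_cube0 ψ hτ hg (hgs ▸ hsol)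
  rw [← hgs, hg0, Jset_zero ψ hτ.ne'] at hJne
  exact not_nonempty_empty hJne

end IsNormLike

theorem stmt17_general {N : ℕ} (ψ : Module.Basis (Fin N) ℝ (Euc N)) (τ : ℝ) (hτ : 0 < τ)
    (f : Euc N → ℝ) (fd : Euc N → ℝ) (hfd : IsNormLike fd)
    (sol : Euc N → Euc N) (hsol : IsSol ψ τ f sol)
    (τ' : ℝ) (K : ℕ) (hK1 : 1 ≤ K)
    (M : ℝ) (hM : M = sSup (fd '' {v : Euc N | ∀ i, |ψ.repr v i| ≤ 1 / 2})) :
    volume {u : Euc N | fd u ≤ τ' ∧ (Jtil ψ τ sol u).ncard = K} /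
        volume {u : Euc N | fd u ≤ τ'} ≤
      (volume (cube0 ψ τ) / volume {u : Euc N | fd u ≤ τ'}) *
        ((SSAT sol fd (ClKset ψ τ K) (Set.Ioi 0) ∩ {u | fd u ≤ τ' + M * τ} ∩
          Dgrid ψ τ).ncard : ENNReal) ∧
    (volume (cube0 ψ τ) / volume {u : Euc N | fd u ≤ τ'}) *
        ((SSAT sol fd (ClKset ψ τ K) (Set.Ioi 0) ∩ {u | fd u ≤ τ' - M * τ} ∩
          Dgrid ψ τ).ncard : ENNReal) ≤
      volume {u : Euc N | fd u ≤ τ' ∧ (Jtil ψ τ sol u).ncard = K} /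
        volume {u : Euc N | fd u ≤ τ'} := by
  have hdist (u : Euc N) : fd (u - gridpt ψ τ u) ≤ M * τ :=
    hfd.sub_gridpt_le ψ hτ (fun v hv => hM ▸ hfd.le_sSup_image_setOf_abs_repr_le ψ hv) u
  have hcell (g : Euc N) (hg : g ∈ Dgrid ψ τ) :
      volume (gridpt ψ τ ⁻¹' {g}) = volume (cube0 ψ τ) :=
    volume_preimage_gridpt ψ hτ hg
  have hfin (R : ℝ) :
      (SSAT sol fd (ClKset ψ τ K) (Ioi 0) ∩ {u | fd u ≤ R} ∩ Dgrid ψ τ).Finite :=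
    (finite_inter_Dgrid ψ hτ.ne' (hfd.isBounded_setOf_le R)).subset
      (inter_subset_inter_left _ inter_subset_right)
  rw [← ENNReal.mul_div_right_comm, ← ENNReal.mul_div_right_comm]
  refine ⟨ENNReal.div_le_div_right ?_ _, ENNReal.div_le_div_right ?_ _⟩
  · refine measure_le_mul_ncard_of_mapsTo (hfin _) ?_ fun g hg => (hcell g hg.2).le
    rintro u ⟨hu, hJ⟩
    refine ⟨⟨hfd.mem_SSAT_ClKset_of_mem_Dgrid ψ hτ (Nat.one_le_iff_ne_zero.mp hK1) ⟨_, rfl⟩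
      (hsol _).1 hJ, ?_⟩, _, rfl⟩
    show fd (gridpt ψ τ u) ≤ τ' + M * τ
    linarith [hfd.le_add_sub (gridpt ψ τ u) u, hfd.map_sub_rev (gridpt ψ τ u) u, hdist u]
  · refine mul_ncard_le_measure_of_preimage_subset (hfin _)
      (fun g _ => measurable_gridpt ψ (measurableSet_singleton g))
      (fun g hg => (hcell g hg.2).ge) ?_
    rintro u ⟨⟨hSSAT, hR⟩, -⟩
    have hR : fd (gridpt ψ τ u) ≤ τ' - M * τ := hR
    exact ⟨by linarith [hfd.le_add_sub u (gridpt ψ τ u), hdist u], hSSAT.1.2⟩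

/-- sandwich for the probability of coding with exactly `K` coefficients,
for `U` uniform on the `f_d`-ball of radius `τ'`, in terms of counts of grid points in
`SSAT(Cl_K,(0,∞))` intersected with the balls of radii `τ' ± Mτ`. -/
theorem stmt17 {N : ℕ} (hN : 1 ≤ N) (ψ : Module.Basis (Fin N) ℝ (Euc N)) (τ : ℝ) (hτ : 0 < τ)
    (f : Euc N → ℝ) (hf : GoodNorm f) (fd : Euc N → ℝ) (hfd : IsNormLike fd)
    (sol : Euc N → Euc N) (hsol : IsSol ψ τ f sol)
    (τ' : ℝ) (hτ' : 0 < τ') (K : ℕ) (hK1 : 1 ≤ K) (hKN : K ≤ N)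
    (M : ℝ) (hM : M = sSup (fd '' {v : Euc N | ∀ i, |ψ.repr v i| ≤ 1 / 2})) :
    volume {u : Euc N | fd u ≤ τ' ∧ (Jtil ψ τ sol u).ncard = K} /
        volume {u : Euc N | fd u ≤ τ'} ≤
      (volume (cube0 ψ τ) / volume {u : Euc N | fd u ≤ τ'}) *
        ((SSAT sol fd (ClKset ψ τ K) (Set.Ioi 0) ∩ {u | fd u ≤ τ' + M * τ} ∩
          Dgrid ψ τ).ncard : ENNReal) ∧
    (volume (cube0 ψ τ) / volume {u : Euc N | fd u ≤ τ'}) *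
        ((SSAT sol fd (ClKset ψ τ K) (Set.Ioi 0) ∩ {u | fd u ≤ τ' - M * τ} ∩
          Dgrid ψ τ).ncard : ENNReal) ≤
      volume {u : Euc N | fd u ≤ τ' ∧ (Jtil ψ τ sol u).ncard = K} /
        volume {u : Euc N | fd u ≤ τ'} :=
  stmt17_general ψ τ hτ f fd hfd sol hsol τ' K hK1 M hM
end
end
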